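/- Max-flow min-cut corollary (finite, integer capacities): in a finite directed network with integer capacities, if every s–t cut has capacity at least k, then there exists an integer-valued s–t flow of value at least k. -/

import Mathlib

/-- An integer-valued `s`–`t` flow on a finite network with capacities `c`. -/
structure IsFlow {V : Type*} [Fintype V] [DecidableEq V]
    (c : V → V → ℕ) (s t : V) (f : V → V → ℤ) : Prop where
  nonneg : ∀ u v, 0 ≤ f u v
  le_cap : ∀ u v, f u v ≤ (c u v : ℤ)
  conserve : ∀ v, v ≠ s → v ≠ t →
    (∑ u : V, f u v) = ∑ w : V, f v w

/-- The value of a flow: the net flow out of the source `s`. -/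
def flowValue {V : Type*} [Fintype V] [DecidableEq V]
    (s : V) (f : V → V → ℤ) : ℤ :=
  (∑ w : V, f s w) - ∑ u : V, f u s

/-- The capacity of an `s`–`t` cut given by a set `S` of vertices. -/
def cutCapacity {V : Type*} [Fintype V] [DecidableEq V]
    (c : V → V → ℕ) (S : Finset V) : ℕ :=
  ∑ u ∈ S, ∑ v ∈ Sᶜ, c u v


/-!
Induction on `k`. If every `s`–`t` cut has positive capacity, the vertices reachable from `s`
along edges of positive capacity do not form a cut, so there is a simple path `P` from `s` to `t`
through such edges. Passing to the residual capacities `c - P + Pᵀ` lowers every `s`–`t` cut by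
exactly one, because `P` crosses each cut once more forwards than backwards. A flow of value `k`
for the residual network plus `P`, with antiparallel flow cancelled, is a flow of value `k + 1`
for `c`.
-/

open Finset Relation

theorem List.exists_nodup_isChain_cons_of_relationReflTransGen {α : Type*} {r : α → α → Prop}
    {a b : α} (h : ReflTransGen r a b) :
    ∃ l, IsChain r (a :: l) ∧ getLast (a :: l) (cons_ne_nil _ _) = b ∧ (a :: l).Nodup := by
  induction h using ReflTransGen.head_induction_on with
  | refl => exact ⟨[], .singleton _, rfl, nodup_singleton _⟩
  | @head c d hcd _ ih =>
    obtain ⟨l, hchain, hlast, hnodup⟩ := ih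
    by_cases hc : c ∈ d :: l
    · obtain ⟨l₁, l₂, hsplit⟩ := append_of_mem hc
      have hsuffix : c :: l₂ <:+ d :: l := hsplit ▸ suffix_append l₁ (c :: l₂)
      refine ⟨l₂, hchain.suffix hsuffix, ?_, hnodup.sublist hsuffix.sublist⟩
      simpa [hsplit, getLast_append_of_ne_nil] using hlast
    · exact ⟨d :: l, .cons_cons hcd hchain, by rwa [getLast_cons_cons],
        nodup_cons.mpr ⟨hc, hnodup⟩⟩

section NetOut

variable {V : Type*} [Fintype V]

def netOut (f : V → V → ℤ) (v : V) : ℤ :=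
  (∑ w, f v w) - ∑ u, f u v

lemma netOut_eq_sum_sub (f : V → V → ℤ) (v : V) : netOut f v = ∑ w, (f v w - f w v) := by
  rw [netOut, sum_sub_distrib]

lemma netOut_add (f g : V → V → ℤ) (v : V) : netOut (f + g) v = netOut f v + netOut g v := by
  simp only [netOut, Pi.add_apply, sum_add_distrib]
  ring

lemma netOut_posPart_sub_swap (g : V → V → ℤ) (v : V) :
    netOut (fun u w => (g u w - g w u)⁺) v = netOut g v := by
  simp only [netOut_eq_sum_sub]
  refine sum_congr rfl fun w _ => ?_
  rw [← neg_sub (g v w), posPart_neg, posPart_sub_negPart]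

lemma sum_netOut [DecidableEq V] (g : V → V → ℤ) (S : Finset V) :
    ∑ u ∈ S, netOut g u = ∑ u ∈ S, ∑ v ∈ Sᶜ, (g u v - g v u) := by
  have hinner : ∑ u ∈ S, ∑ v ∈ S, (g u v - g v u) = 0 := by
    simp only [sum_sub_distrib]
    rw [sum_comm, sub_self]
  simp only [netOut_eq_sum_sub, ← sum_add_sum_compl S, sum_add_distrib, hinner, zero_add]

lemma flowValue_eq_netOut [DecidableEq V] (s : V) (f : V → V → ℤ) :
    flowValue s f = netOut f s :=
  rfl

end NetOut

section PathFlow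

variable {V : Type*} [DecidableEq V]

def pathFlow : List V → V → V → ℕ
  | a :: b :: l => fun u v => (if u = a ∧ v = b then 1 else 0) + pathFlow (b :: l) u v
  | _ => fun _ _ => 0

lemma pathFlow_eq_zero_of_notMem {L : List V} {u : V} (hu : u ∉ L) (v : V) :
    pathFlow L u v = 0 := by
  induction L using pathFlow.induct with
  | case1 a b l ih =>
    simp only [List.mem_cons, not_or] at hu
    simp [pathFlow, hu.1, ih (by simpa using hu.2)]
  | case2 => simp_all [pathFlow]

lemma pathFlow_le_one {L : List V} (hL : L.Nodup) (u v : V) : pathFlow L u v ≤ 1 := by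
  induction L using pathFlow.induct with
  | case1 a b l ih =>
    obtain ⟨ha, hL⟩ := List.nodup_cons.mp hL
    by_cases hu : u = a
    · subst hu
      simp only [pathFlow, true_and, pathFlow_eq_zero_of_notMem ha, add_zero]
      split_ifs <;> simp
    · simp [pathFlow, hu, ih hL]
  | case2 => simp_all [pathFlow]

lemma rel_of_pathFlow_pos {r : V → V → Prop} {L : List V} (hL : L.IsChain r) {u v : V}
    (h : 0 < pathFlow L u v) : r u v := by
  induction L using pathFlow.induct with
  | case1 a b l ih =>
    obtain ⟨hab, hL⟩ := List.isChain_cons_cons.mp hL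
    by_cases huv : u = a ∧ v = b
    · exact huv.1 ▸ huv.2 ▸ hab
    · exact ih hL (by simpa [pathFlow, huv] using h)
  | case2 => simp_all [pathFlow]

lemma netOut_pathFlow [Fintype V] (a : V) (l : List V) (v : V) :
    netOut (fun u w => (pathFlow (a :: l) u w : ℤ)) v =
      (if v = a then 1 else 0) -
        (if v = (a :: l).getLast (List.cons_ne_nil a l) then 1 else 0) := by
  induction l generalizing a with
  | nil =>
    by_cases h : v = a <;> simp [pathFlow, netOut, h]
  | cons b l ih =>
    have hsplit : (fun u w => (pathFlow (a :: b :: l) u w : ℤ)) =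
        (fun u w => if u = a ∧ w = b then 1 else 0) + fun u w => (pathFlow (b :: l) u w : ℤ) := by
      ext u w
      simp [pathFlow]
    rw [hsplit, netOut_add, ih, List.getLast_cons_cons]
    simp [netOut, ite_and]

end PathFlow

def residualCap {V : Type*} (c P : V → V → ℕ) : V → V → ℕ :=
  fun u v => c u v - P u v + P v u

section Network

variable {V : Type*} [Fintype V] [DecidableEq V]

lemma reflTransGen_of_cutCapacity_pos {c : V → V → ℕ} {s t : V}
    (hcut : ∀ S : Finset V, s ∈ S → t ∉ S → 0 < cutCapacity c S) :
    ReflTransGen (fun u v => 0 < c u v) s t := by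
  classical
  by_contra hst
  let S := univ.filter (ReflTransGen (fun u v => 0 < c u v) s)
  have hS : cutCapacity c S = 0 :=
    sum_eq_zero fun u hu => sum_eq_zero fun v hv => by
      simp only [S, mem_filter, mem_compl, mem_univ, true_and] at hu hv
      exact Nat.eq_zero_of_not_pos fun huv => hv (hu.tail huv)
  exact (hcut S (by simp [S, ReflTransGen.refl]) (by simpa [S])).ne' hS

lemma exists_unit_flow_of_reflTransGen {c : V → V → ℕ} {s t : V}
    (h : ReflTransGen (fun u v => 0 < c u v) s t) :
    ∃ P : V → V → ℕ, (∀ u v, P u v ≤ c u v) ∧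
      ∀ v, netOut (fun u w => (P u w : ℤ)) v =
        (if v = s then 1 else 0) - (if v = t then 1 else 0) := by
  obtain ⟨l, hchain, hlast, hnodup⟩ := List.exists_nodup_isChain_cons_of_relationReflTransGen h
  refine ⟨pathFlow (s :: l), fun u v => ?_, fun v => hlast ▸ netOut_pathFlow s l v⟩
  rcases Nat.eq_zero_or_pos (pathFlow (s :: l) u v) with h0 | hpos
  · exact h0 ▸ Nat.zero_le _
  · exact (pathFlow_le_one hnodup u v).trans (rel_of_pathFlow_pos hchain hpos)

lemma cutCapacity_residualCap {c P : V → V → ℕ} (hP : ∀ u v, P u v ≤ c u v) (S : Finset V) :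
    (cutCapacity (residualCap c P) S : ℤ) =
      cutCapacity c S - ∑ u ∈ S, netOut (fun u v => (P u v : ℤ)) u := by
  rw [sum_netOut, cutCapacity, cutCapacity]
  push_cast [residualCap, Nat.cast_sub (hP _ _)]
  simp only [← sum_sub_distrib]
  refine sum_congr rfl fun u _ => sum_congr rfl fun v _ => by ring

lemma IsFlow.netOut_eq_zero {c : V → V → ℕ} {s t : V} {f : V → V → ℤ} (hf : IsFlow c s t f)
    {v : V} (hs : v ≠ s) (ht : v ≠ t) : netOut f v = 0 :=
  sub_eq_zero.mpr (hf.conserve v hs ht).symm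

lemma IsFlow.exists_augment {c P : V → V → ℕ} {s t : V} {f : V → V → ℤ}
    (hf : IsFlow (residualCap c P) s t f) (hP : ∀ u v, P u v ≤ c u v)
    (hPcons : ∀ v, v ≠ s → v ≠ t → netOut (fun u w => (P u w : ℤ)) v = 0) :
    ∃ f' : V → V → ℤ, IsFlow c s t f' ∧
      flowValue s f' = flowValue s f + netOut (fun u w => (P u w : ℤ)) s := by
  set g : V → V → ℤ := f + fun u w => (P u w : ℤ)
  have hnet : ∀ v, netOut (fun u w => (g u w - g w u)⁺) v =
      netOut f v + netOut (fun u w => (P u w : ℤ)) v := fun v => by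
    rw [netOut_posPart_sub_swap, netOut_add]
  refine ⟨fun u w => (g u w - g w u)⁺,
    ⟨fun _ _ => posPart_nonneg _, fun u w => ?_, fun v hs ht => ?_⟩, ?_⟩
  · have hcap := hf.le_cap u w
    have hrev := hf.nonneg w u
    push_cast [residualCap, Nat.cast_sub (hP u w)] at hcap
    refine sup_le ?_ (Int.natCast_nonneg _)
    simp only [g, Pi.add_apply]
    linarith
  · have := hnet v
    rw [hf.netOut_eq_zero hs ht, hPcons v hs ht, netOut] at this
    linarith
  · simp only [flowValue_eq_netOut, hnet]

end Network

/-- Max-flow min-cut corollary: if every `s`–`t` cut has capacity at least `k`,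
there is an integer-valued `s`–`t` flow of value at least `k`. -/
theorem exists_flow_of_cut_capacity_ge {V : Type*} [Fintype V] [DecidableEq V]
    (c : V → V → ℕ) (s t : V) (hst : s ≠ t) (k : ℕ)
    (hcut : ∀ S : Finset V, s ∈ S → t ∉ S → k ≤ cutCapacity c S) :
    ∃ f : V → V → ℤ, IsFlow c s t f ∧ (k : ℤ) ≤ flowValue s f := by
  induction k generalizing c with
  | zero =>
    exact ⟨0, ⟨fun _ _ => le_rfl, fun _ _ => by simp, fun _ _ _ => rfl⟩, by simp [flowValue]⟩
  | succ k ih =>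
    obtain ⟨P, hPc, hPnet⟩ := exists_unit_flow_of_reflTransGen
      (reflTransGen_of_cutCapacity_pos fun S hs ht => k.succ_pos.trans_le (hcut S hs ht))
    obtain ⟨f, hf, hfk⟩ := ih (residualCap c P) fun S hs ht => by
      have hres := cutCapacity_residualCap hPc S
      simp only [hPnet, sum_sub_distrib, sum_ite_eq', if_pos hs, if_neg ht] at hres
      have := hcut S hs ht
      omega
    obtain ⟨f', hf', hval⟩ := hf.exists_augment hPc fun v hs ht => by simp [hPnet, hs, ht]
    refine ⟨f', hf', ?_⟩
    rw [hval, hPnet, if_pos rfl, if_neg hst]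
    push_cast
    linarith
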